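/- arXiv:2208.09918 — 2 statements merged into one kernel-verified Lean document; each statement's English description precedes it below -/
import Mathlib

section
/- Let G be a finite connected graph on which a group Γ acts freely on the vertex set by graph automorphisms. Then there exists a connected subgraph D of G containing exactly one vertex from each Γ-orbit (i.e., a connected fundamental domain for the action on vertices). -/
/-- Let `G` be a finite connected graph on which a group `Γ` acts freely on the
vertex set by graph automorphisms.  Then there is a connected subgraph `D` of `G` containing
exactly one vertex from each `Γ`-orbit (a connected fundamental domain). -/
theorem stmt_0 {V Γ : Type*} [Group Γ] [Fintype V] [MulAction Γ V]
    (G : SimpleGraph V) (hconn : G.Connected)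
    (hadj : ∀ (g : Γ) (u v : V), G.Adj u v → G.Adj (g • u) (g • v))
    (hfree : ∀ (g : Γ) (v : V), g • v = v → g = 1) :
    ∃ D : G.Subgraph, D.Connected ∧
      ∀ v : V, ∃! u : V, u ∈ D.verts ∧ u ∈ MulAction.orbit Γ v := by
  classical
  -- property: induced connected, and at most one vertex per orbit
  set P : Finset V → Prop := fun S =>
    ((⊤ : G.Subgraph).induce ↑S).Connected ∧
      ∀ u ∈ S, ∀ v ∈ S, u ∈ MulAction.orbit Γ v → u = v with hP
  obtain ⟨v₀⟩ := hconn.nonempty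
  have hP0 : P {v₀} := by
    constructor
    · rw [show ((↑({v₀} : Finset V) : Set V)) = ({v₀} : Set V) by simp,
        ← SimpleGraph.Subgraph.singletonSubgraph_eq_induce]
      exact SimpleGraph.Subgraph.singletonSubgraph_connected (G := G) (v := v₀)
    · intro u hu v hv _
      simp only [Finset.mem_singleton] at hu hv; rw [hu, hv]
  -- choose S with P S of maximal cardinality
  obtain ⟨S, hSmem, hSmax⟩ :=
    Finset.exists_max_image (Finset.univ.filter P) Finset.card
      ⟨{v₀}, Finset.mem_filter.mpr ⟨Finset.mem_univ _, hP0⟩⟩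
  obtain ⟨hSconn, hSorb⟩ : P S := (Finset.mem_filter.mp hSmem).2
  -- claim: the orbit of S covers V
  have hcover : ∀ v : V, ∃ s ∈ S, v ∈ MulAction.orbit Γ s := by
    by_contra hcov
    push_neg at hcov
    obtain ⟨b, hb⟩ := hcov
    set T : Set V := {v | ∃ s ∈ S, v ∈ MulAction.orbit Γ s} with hT
    have hv₀S : (S : Set V).Nonempty := by
      rcases hSconn.nonempty with ⟨x, hx⟩; exact ⟨x, hx⟩
    obtain ⟨s₀, hs₀⟩ := hv₀S
    have hs₀T : s₀ ∈ T := ⟨s₀, hs₀, MulAction.mem_orbit_self _⟩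
    have hbT : b ∉ T := fun ⟨s, hs, ho⟩ => hb s hs ho
    -- find a boundary dart
    obtain ⟨p⟩ := hconn s₀ b
    obtain ⟨d, _, haT, hbT'⟩ := p.exists_boundary_dart T hs₀T hbT
    obtain ⟨s, hsS, g, hg⟩ := haT
    -- the new vertex
    set c : V := g⁻¹ • d.snd with hc
    have hadj' : G.Adj s c := by
      have := hadj g⁻¹ d.fst d.snd d.adj
      rwa [show g⁻¹ • d.fst = s by rw [← hg]; simp] at this
    have hcT : c ∉ T := by
      rintro ⟨s', hs', h, hh⟩
      have hh' : h • s' = c := hh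
      exact hbT' ⟨s', hs', g * h, by simp [mul_smul, hh', hc]⟩
    have hcS : c ∉ S := fun h => hcT ⟨c, h, MulAction.mem_orbit_self _⟩
    -- insert c into S
    have hP' : P (insert c S) := by
      refine ⟨?_, ?_⟩
      · rw [← SimpleGraph.connected_induce_iff] at hSconn ⊢
        have : (insert c ↑S : Set V) = ({s, c} : Set V) ∪ ↑S := by
          ext x
          simp only [Set.mem_insert_iff, Set.mem_union, Set.mem_singleton_iff,
            Finset.mem_coe]
          constructor
          · rintro (rfl | h)
            exacts [Or.inl (Or.inr rfl), Or.inr h]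
          · rintro ((rfl | rfl) | h)
            exacts [Or.inr hsS, Or.inl rfl, Or.inr h]
        rw [Finset.coe_insert, this]
        exact SimpleGraph.induce_union_connected
          (SimpleGraph.induce_pair_connected_of_adj hadj').preconnected hSconn.preconnected
          ⟨s, by simp, hsS⟩
      · intro u hu v hv ho
        rcases Finset.mem_insert.mp hu with rfl | hu <;>
          rcases Finset.mem_insert.mp hv with rfl | hv
        · rfl
        · exact absurd ⟨v, hv, ho⟩ hcT
        · obtain ⟨g', hg'⟩ := ho
          exact absurd ⟨u, hu, g'⁻¹, by simp [← hg']⟩ hcT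
        · exact hSorb u hu v hv ho
    have := hSmax (insert c S) (Finset.mem_filter.mpr ⟨Finset.mem_univ _, hP'⟩)
    rw [Finset.card_insert_of_notMem hcS] at this
    omega
  refine ⟨(⊤ : G.Subgraph).induce ↑S, hSconn, fun v => ?_⟩
  obtain ⟨s, hsS, g, hg⟩ := hcover v
  refine ⟨s, ⟨hsS, g⁻¹, by simp [← hg]⟩, ?_⟩
  rintro u ⟨huS, h, hh⟩
  have h1 : g • s = v := hg
  have h2 : h • v = u := hh
  exact hSorb u huS s hsS ⟨h * g, by simp [mul_smul, h1, h2]⟩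
end

section
/- Every finite generalised Cayley complex X with at least 3 vertices is locally 1-connected; that is, the link graph L_X(v) is connected for every vertex v of X. -/
/-- A (combinatorial) 2-complex: a 1-skeleton (simple graph) together with a set of 2-cells,
each given by the cyclic list of vertices on its boundary. -/
structure TwoComplex (V : Type*) where
  skel : SimpleGraph V
  faces : Set (List V)
  faces_cyclic : ∀ f ∈ faces, 3 ≤ f.length ∧ List.Chain' skel.Adj (f ++ f.take 1)

/-- `x :: C` traverses the boundary of some face of `X` (in either direction, starting
anywhere). -/
def IsFaceLoop {V : Type*} (X : TwoComplex V) (x : V) (C : List V) : Prop :=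
  ∃ f ∈ X.faces, ∃ k : ℕ, x :: C = f.rotate k ∨ x :: C = (f.rotate k).reverse

/-- Combinatorial homotopy of edge-walks in a 2-complex: generated by erasing backtracks and
erasing closed subwalks that traverse a face boundary. -/
inductive Homotopic {V : Type*} (X : TwoComplex V) : List V → List V → Prop
  | refl (L : List V) : Homotopic X L L
  | symm {L M : List V} : Homotopic X L M → Homotopic X M L
  | trans {L M N : List V} : Homotopic X L M → Homotopic X M N → Homotopic X L N
  | backtrack (A B : List V) (x y : V) :
      Homotopic X (A ++ x :: y :: x :: B) (A ++ x :: B)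
  | face (A B C : List V) (x : V) (hC : IsFaceLoop X x C) :
      Homotopic X (A ++ x :: (C ++ x :: B)) (A ++ x :: B)

/-- `L` is a closed walk of the 1-skeleton based at `o`. -/
def IsClosedWalkAt {V : Type*} (X : TwoComplex V) (o : V) (L : List V) : Prop :=
  L.head? = some o ∧ L.getLast? = some o ∧ List.Chain' X.skel.Adj L

/-- A 2-complex is simply connected if it is connected and every closed walk is
null-homotopic. -/
def TwoComplex.SimplyConnected {V : Type*} (X : TwoComplex V) : Prop :=
  X.skel.Connected ∧ ∀ (o : V) (L : List V), IsClosedWalkAt X o L → Homotopic X L [o]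

/-- `u, v, w` occur consecutively (in this order) on the boundary of some face of `X`,
read cyclically. -/
def Consec {V : Type*} (X : TwoComplex V) (u v w : V) : Prop :=
  ∃ f ∈ X.faces, ∃ k : ℕ, [u, v, w] <+: f.rotate k

/-- The link graph of `X` at `v`: vertices are the neighbours of `v` in the 1-skeleton, and two
neighbours `u, w` are joined whenever `u, v, w` occur consecutively in some 2-cell of `X`. -/
def linkGraph {V : Type*} (X : TwoComplex V) (v : V) :
    SimpleGraph {u : V // X.skel.Adj v u} :=
  SimpleGraph.fromRel (fun u w => Consec X u.1 v w.1)

namespace Stmt4Aux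
variable {V : Type*} (v : V) (h : V → ℤ)

open Classical in
/-- Weight of a single step. -/
noncomputable def ew (p q : V) : ℤ := (if p = v then h q else 0) - (if q = v then h p else 0)

/-- Weight of a walk (list of vertices). -/
noncomputable def phi : List V → ℤ
  | [] => 0
  | [_] => 0
  | p :: q :: L => ew v h p q + phi (q :: L)

@[simp] lemma phi_nil : phi v h [] = 0 := rfl
@[simp] lemma phi_single (x : V) : phi v h [x] = 0 := rfl
lemma phi_cons_cons (p q : V) (L : List V) :
    phi v h (p :: q :: L) = ew v h p q + phi v h (q :: L) := rfl

lemma ew_anti (p q : V) : ew v h p q + ew v h q p = 0 := by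
  unfold ew; ring

@[simp] lemma ew_self : ew v h v v = 0 := by simp [ew]

lemma ew_ne_ne {p q : V} (hp : p ≠ v) (hq : q ≠ v) : ew v h p q = 0 := by
  simp [ew, hp, hq]

lemma phi_append_cons (A : List V) (x : V) (M : List V) :
    phi v h (A ++ x :: M) = phi v h (A ++ [x]) + phi v h (x :: M) := by
  induction A with
  | nil => simp [phi]
  | cons a A ih =>
    cases A with
    | nil => cases M with
      | nil => simp [phi]
      | cons m M => simp [phi_cons_cons]
    | cons b A' =>
      simp only [List.cons_append, phi_cons_cons] at *
      rw [ih]; ring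

end Stmt4Aux
namespace Stmt4Aux
variable {V : Type*} (v : V) (h : V → ℤ)

lemma phi_backtrack (A B : List V) (x y : V) :
    phi v h (A ++ x :: y :: x :: B) = phi v h (A ++ x :: B) := by
  rw [phi_append_cons, phi_append_cons v h A x B, phi_cons_cons, phi_cons_cons]
  have := ew_anti v h x y
  omega

lemma phi_notmem {L : List V} (hL : v ∉ L) : phi v h L = 0 := by
  induction L with
  | nil => rfl
  | cons p M ih =>
    cases M with
    | nil => rfl
    | cons q M' =>
      rw [phi_cons_cons, ih (by simp at hL ⊢; tauto),
        ew_ne_ne v h (by simp at hL; tauto) (by simp at hL; tauto)]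
      ring

/-- rotating by one preserves the cyclic phi. -/
lemma phi_cyc_rotate_one (ℓ : List V) :
    phi v h (ℓ.rotate 1 ++ (ℓ.rotate 1).take 1) = phi v h (ℓ ++ ℓ.take 1) := by
  cases ℓ with
  | nil => rfl
  | cons a t =>
    cases t with
    | nil => simp
    | cons b t' =>
      have hrot : (a :: b :: t').rotate 1 = (b :: t') ++ [a] := by
        simpa using List.rotate_cons_succ (b :: t') a 0
      rw [hrot]
      have h1 : ((b :: t') ++ [a]).take 1 = [b] := rfl
      rw [h1]
      have h2 : ((b :: t') ++ [a]) ++ [b] = (b :: t') ++ a :: [b] := by simp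
      rw [h2, phi_append_cons]
      have h3 : (a :: b :: t') ++ List.take 1 (a :: b :: t') = [a] ++ b :: (t' ++ [a]) := by simp
      rw [h3, phi_append_cons]
      simp only [List.cons_append, List.nil_append, phi_cons_cons]
      simp [phi]
      ring

lemma phi_cyc_rotate (ℓ : List V) (k : ℕ) :
    phi v h (ℓ.rotate k ++ (ℓ.rotate k).take 1) = phi v h (ℓ ++ ℓ.take 1) := by
  induction k with
  | zero => simp
  | succ n ih =>
    have : ℓ.rotate (n + 1) = (ℓ.rotate n).rotate 1 := by
      rw [List.rotate_rotate]
    rw [this, phi_cyc_rotate_one, ih]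

end Stmt4Aux
namespace Stmt4Aux
variable {V : Type*} (v : V) (h : V → ℤ)

lemma prefix_triple {a b x y : V} {M : List V} (hp : [a, v, b] <+: x :: y :: M) :
    a = x ∧ v = y ∧ [b] <+: M := by
  rw [List.cons_prefix_cons] at hp
  obtain ⟨h1, hp⟩ := hp
  rw [List.cons_prefix_cons] at hp
  exact ⟨h1, hp.1, hp.2⟩

lemma phi_linear : ∀ (n : ℕ) (M : List V), M.length ≤ n →
    (∀ i a b, [a, v, b] <+: M.drop i → h a = h b) →
    (∀ y ∈ M.head?, y ≠ v) → (∀ y ∈ M.getLast?, y ≠ v) →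
    phi v h M = 0 := by
  intro n
  induction n with
  | zero => intro M hM _ _ _; rw [List.length_eq_zero_iff.mp (Nat.le_zero.mp hM)]; rfl
  | succ n ih =>
    intro M hM H3 hd lt
    match M with
    | [] => rfl
    | [x] => rfl
    | x :: y :: M' =>
      have hx : x ≠ v := hd x rfl
      by_cases hy : y = v
      · subst y
        -- M = x :: v :: M'
        match M' with
        | [] => exact absurd (lt v rfl) (fun H => H rfl)
        | z :: M'' =>
          by_cases hz : z = v
          · subst z
            -- M = x :: v :: v :: M''
            have hM2 : (x :: v :: M'').length ≤ n := by simp at hM ⊢; omega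
            have hlast : ∀ y ∈ (x :: v :: M'').getLast?, y ≠ v := by
              intro y hy
              apply lt
              match M'' with
              | [] => exact absurd (lt v rfl) (fun H => H rfl)
              | w :: M₃ => simpa [List.getLast?_cons_cons] using hy
            have H3' : ∀ i a b, [a, v, b] <+: (x :: v :: M'').drop i → h a = h b := by
              intro i a b hp
              match i with
              | 0 =>
                obtain ⟨ha, -, hb⟩ := prefix_triple v hp
                obtain ⟨M₃, hM₃⟩ := hb
                subst ha
                -- M'' = b :: M₃
                have e1 : h a = h v := H3 0 a v ⟨M'', by simp⟩
                have e2 : h v = h b := by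
                  apply H3 1 v b
                  simp only [List.drop_succ_cons, List.drop_zero]
                  exact ⟨M₃, by rw [← hM₃]; rfl⟩
                omega
              | 1 =>
                -- (x :: v :: M'').drop 1 = v :: M'' = (x::v::v::M'').drop 2
                apply H3 2 a b
                simpa using hp
              | (i+2) =>
                apply H3 (i+3) a b
                simpa using hp
            have h1 := ih (x :: v :: M'') hM2 H3' (by simpa using hx) hlast
            have e : phi v h (v :: v :: M'') = phi v h (v :: M'') := by
              rw [phi_cons_cons, ew_self]; ring
            rw [phi_cons_cons] at h1 ⊢
            rw [e]
            omega
          · -- M = x :: v :: z :: M'', z ≠ v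
            have e1 : h x = h z := H3 0 x z ⟨M'', rfl⟩
            have hM2 : (z :: M'').length ≤ n := by simp at hM ⊢; omega
            have H3' : ∀ i a b, [a, v, b] <+: (z :: M'').drop i → h a = h b := by
              intro i a b hp
              exact H3 (i + 2) a b (by simpa using hp)
            have hlast : ∀ y ∈ (z :: M'').getLast?, y ≠ v := by
              intro y hy; exact lt y (by simpa [List.getLast?_cons_cons] using hy)
            have := ih (z :: M'') hM2 H3' (by simpa using hz) hlast
            have ew1 : ew v h x v = -h x := by unfold ew; simp [hx]
            have ew2 : ew v h v z = h z := by unfold ew; simp [hz]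
            rw [phi_cons_cons, phi_cons_cons, this, ew1, ew2, e1]
            ring
      · -- y ≠ v
        have hM2 : (y :: M').length ≤ n := by simp at hM ⊢; omega
        have H3' : ∀ i a b, [a, v, b] <+: (y :: M').drop i → h a = h b := by
          intro i a b hp
          exact H3 (i + 1) a b (by simpa using hp)
        have hlast : ∀ w ∈ (y :: M').getLast?, w ≠ v := by
          intro w hw; exact lt w (by simpa [List.getLast?_cons_cons] using hw)
        have := ih (y :: M') hM2 H3' (by simpa using hy) hlast
        rw [phi_cons_cons, this, ew_ne_ne v h hx hy]
        ring

end Stmt4Aux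
namespace Stmt4Aux
variable {V : Type*} (v : V) (h : V → ℤ)

lemma phi_const_v : ∀ (L : List V), (∀ x ∈ L, x = v) → phi v h L = 0 := by
  intro L
  induction L with
  | nil => intro _; rfl
  | cons p M ih =>
    intro hall
    cases M with
    | nil => rfl
    | cons q M' =>
      rw [phi_cons_cons, ih (fun x hx => hall x (List.mem_cons_of_mem p hx)),
        hall p (by simp), hall q (by simp), ew_self]
      ring

lemma prefix_of_prefix_append {p A B : List V} (hp : p <+: A ++ B)
    (hlen : p.length ≤ A.length) : p <+: A := by
  have h1 : p = (A ++ B).take p.length := List.prefix_iff_eq_take.mp hp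
  rw [List.take_append, Nat.sub_eq_zero_of_le hlen, List.take_zero,
    List.append_nil] at h1
  rw [h1]
  exact List.take_prefix _ _

lemma phi_cyclic_zero (ℓ : List V) (hlen : 3 ≤ ℓ.length)
    (Hg : ∀ (j : ℕ) (a b : V), [a, v, b] <+: ℓ.rotate j → h a = h b) :
    phi v h (ℓ ++ ℓ.take 1) = 0 := by
  by_cases hall : ∀ x ∈ ℓ, x = v
  · apply phi_const_v
    intro x hx
    rw [List.mem_append] at hx
    exact hall x (hx.elim id (fun H => List.mem_of_mem_take H))
  · push_neg at hall
    obtain ⟨x, hxmem, hxv⟩ := hall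
    obtain ⟨A, B, rfl⟩ := List.append_of_mem hxmem
    rw [← phi_cyc_rotate v h _ A.length]
    have hAle : A.length ≤ (A ++ x :: B).length := by simp
    have hm : (A ++ x :: B).rotate A.length = x :: (B ++ A) := by
      rw [List.rotate_eq_drop_append_take hAle, List.drop_left, List.take_left]
      simp
    have hn : (x :: (B ++ A)).length = (A ++ x :: B).length := by simp; omega
    rw [hm]
    have htake : (x :: (B ++ A)).take 1 = [x] := rfl
    rw [htake]
    apply phi_linear v h ((x :: (B ++ A)) ++ [x]).length _ le_rfl
    · -- H3
      intro i a b hp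
      have hplen : ([a, v, b]).length ≤ (((x :: (B ++ A)) ++ [x]).drop i).length :=
        hp.length_le
      simp only [List.length_cons, List.length_drop, List.length_append,
        List.length_singleton] at hplen
      have hlen' : 3 ≤ B.length + A.length + 1 := by
        simp only [List.length_append, List.length_cons] at hlen; omega
      have hile : i ≤ B.length + A.length + 1 - 2 := by omega
      have key : [a, v, b] <+: (x :: (B ++ A)).rotate i := by
        have hiled : i ≤ (x :: (B ++ A)).length := by simp; omega
        have hrot : (x :: (B ++ A)).rotate i
            = (x :: (B ++ A)).drop i ++ (x :: (B ++ A)).take i :=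
          List.rotate_eq_drop_append_take hiled
        have hdrop : ((x :: (B ++ A)) ++ [x]).drop i = (x :: (B ++ A)).drop i ++ [x] := by
          rw [List.drop_append]
          congr 1
          rw [show i - (x :: (B ++ A)).length = 0 from by simp; omega]
          rfl
        rw [hdrop] at hp
        by_cases hcase : i ≤ B.length + A.length + 1 - 3
        · have : [a, v, b] <+: (x :: (B ++ A)).drop i := by
            apply prefix_of_prefix_append hp
            simp only [List.length_drop, List.length_cons, List.length_append,
              List.length_cons]
            simp
            omega
          rw [hrot]
          exact this.trans (List.prefix_append _ _)
        · have hlen2 : ((x :: (B ++ A)).drop i ++ [x]).length = 3 := by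
            simp
            omega
          have heqq : [a, v, b] = (x :: (B ++ A)).drop i ++ [x] :=
            List.IsPrefix.eq_of_length hp (by simp at hlen2 ⊢; omega)
          have hi1 : 1 ≤ i := by omega
          have htk : (x :: (B ++ A)).take i = x :: (B ++ A).take (i - 1) := by
            cases i with
            | zero => omega
            | succ j => simp
          rw [hrot, htk, heqq]
          have : (x :: (B ++ A)).drop i ++ x :: (B ++ A).take (i-1)
              = ((x :: (B ++ A)).drop i ++ [x]) ++ (B ++ A).take (i-1) := by simp
          rw [this]
          exact List.prefix_append _ _
      exact Hg (A.length + i) a b (by rwa [← List.rotate_rotate, hm])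
    · simpa using hxv
    · intro y hy
      rw [List.getLast?_append_cons] at hy
      simp at hy
      subst hy
      exact hxv
end Stmt4Aux
namespace Stmt4Aux
variable {V : Type*} (v : V) (h : V → ℤ)

lemma phi_face_loop {X : TwoComplex V}
    (Hh : ∀ f ∈ X.faces, ∀ (k : ℕ) (a b : V), [a, v, b] <+: f.rotate k → h a = h b)
    {x : V} {C : List V} (hC : IsFaceLoop X x C) :
    phi v h ((x :: C) ++ [x]) = 0 := by
  obtain ⟨f, hf, k, hcase⟩ := hC
  have hflen := (X.faces_cyclic f hf).1
  have h1 : (x :: C).take 1 = [x] := rfl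
  rw [← h1]
  rcases hcase with he | he
  · apply phi_cyclic_zero
    · rw [he, List.length_rotate]; exact hflen
    · intro j a b hp
      rw [he, List.rotate_rotate] at hp
      exact Hh f hf (k + j) a b hp
  · apply phi_cyclic_zero
    · rw [he, List.length_reverse, List.length_rotate]; exact hflen
    · intro j a b hp
      rw [he, List.rotate_reverse, List.rotate_rotate] at hp
      set m := k + ((f.rotate k).length - j % (f.rotate k).length) with hmdef
      -- hp : [a, v, b] <+: (f.rotate m).reverse
      obtain ⟨t, ht⟩ := hp
      have hw : f.rotate m = t.reverse ++ [b, v, a] := by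
        have := congrArg List.reverse ht
        simpa using this.symm
      have hsuf : [b, v, a] <+: (f.rotate m).rotate t.reverse.length := by
        have hle : t.reverse.length ≤ (f.rotate m).length := by
          rw [hw]; simp
        rw [List.rotate_eq_drop_append_take hle, hw, List.drop_left, List.take_left]
        exact List.prefix_append _ _
      rw [List.rotate_rotate] at hsuf
      exact (Hh f hf _ b a hsuf).symm

lemma phi_homotopic {X : TwoComplex V}
    (Hh : ∀ f ∈ X.faces, ∀ (k : ℕ) (a b : V), [a, v, b] <+: f.rotate k → h a = h b)
    {L M : List V} (hom : Homotopic X L M) : phi v h L = phi v h M := by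
  induction hom with
  | refl _ => rfl
  | symm _ ih => exact ih.symm
  | trans _ _ ih1 ih2 => exact ih1.trans ih2
  | backtrack A B x y => exact phi_backtrack v h A B x y
  | face A B C x hC =>
    have h0 := phi_face_loop v h Hh hC
    have e1 : A ++ x :: (C ++ x :: B) = A ++ x :: (C ++ x :: B) := rfl
    rw [phi_append_cons v h A x (C ++ x :: B), phi_append_cons v h A x B]
    have e2 : x :: (C ++ x :: B) = (x :: C) ++ x :: B := by simp
    rw [e2, phi_append_cons v h (x :: C) x B, h0]
    ring

end Stmt4Aux
namespace Stmt4Aux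
variable {V : Type*} (v : V) (h : V → ℤ)

lemma chain'_cyclic_rotate_one {R : V → V → Prop} {l : List V}
    (hc : List.Chain' R (l ++ l.take 1)) :
    List.Chain' R (l.rotate 1 ++ (l.rotate 1).take 1) := by
  cases l with
  | nil => simpa using hc
  | cons a t =>
    cases t with
    | nil => simpa using hc
    | cons b t' =>
      have hrot : (a :: b :: t').rotate 1 = (b :: t') ++ [a] := by
        simpa using List.rotate_cons_succ (b :: t') a 0
      rw [hrot]
      have htk : ((b :: t') ++ [a]).take 1 = [b] := rfl
      rw [htk]
      have hc' : List.Chain' R (a :: ((b :: t') ++ [a])) := by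
        simpa using hc
      rw [show (a :: ((b :: t') ++ [a])) = a :: b :: (t' ++ [a]) from by simp,
        List.Chain', List.isChain_cons_cons] at hc'
      obtain ⟨hab, hrest⟩ := hc'
      apply List.IsChain.append (by simpa using hrest) (List.isChain_singleton b)
      intro x hx y hy
      simp only [List.head?_cons, Option.mem_some_iff] at hy
      have : x = a := by
        have h2 := List.getLast?_append_cons (b :: t') a ([] : List V)
        simp only [List.getLast?_singleton] at h2
        rw [h2] at hx
        exact (by simpa using hx : a = x).symm
      subst this; subst hy; exact hab

lemma chain'_cyclic_rotate {R : V → V → Prop} {l : List V}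
    (hc : List.Chain' R (l ++ l.take 1)) (k : ℕ) :
    List.Chain' R (l.rotate k ++ (l.rotate k).take 1) := by
  induction k with
  | zero => simpa using hc
  | succ n ih =>
    rw [show l.rotate (n + 1) = (l.rotate n).rotate 1 from by rw [List.rotate_rotate]]
    exact chain'_cyclic_rotate_one ih

lemma phi_vwalk : ∀ (S : List V), v ∉ S → ∀ u w : V, S.head? = some u →
    S.getLast? = some w → phi v h (v :: S ++ [v]) = h u - h w := by
  intro S
  induction S with
  | nil => intro _ u w hh; simp at hh
  | cons s S' ih =>
    intro hmem u w hh hl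
    have hs : s ≠ v := fun H => hmem (H ▸ List.mem_cons_self (a := s) (l := S'))
    simp only [List.head?_cons, Option.some_inj] at hh
    subst hh
    cases S' with
    | nil =>
      simp only [List.getLast?_singleton, Option.some_inj] at hl
      subst hl
      show phi v h [v, s, v] = h s - h s
      rw [phi_cons_cons, phi_cons_cons]
      unfold ew
      simp [hs]
    | cons s' S'' =>
      have hmem' : v ∉ s' :: S'' := fun H => hmem (List.mem_cons_of_mem _ H)
      have hl' : (s' :: S'').getLast? = some w := by
        rwa [List.getLast?_cons_cons] at hl
      have := ih hmem' s' w rfl hl'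
      rw [show (v :: (s' :: S'') ++ [v]) = v :: s' :: (S'' ++ [v]) from by simp,
        phi_cons_cons] at this
      have hs' : s' ≠ v := fun H => hmem' (H ▸ List.mem_cons_self (a := s') (l := S''))
      have hews' : ew v h v s' = h s' := by unfold ew; simp [hs']
      rw [hews'] at this
      -- this : h s' + phi v h (s' :: (S'' ++ [v])) = h s' - h w
      rw [show (v :: (s :: s' :: S'') ++ [v]) = v :: s :: s' :: (S'' ++ [v]) from by simp,
        phi_cons_cons, phi_cons_cons]
      have hewu : ew v h v s = h s := by unfold ew; simp [hs]
      have hews : ew v h s s' = 0 := ew_ne_ne v h hs hs'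
      rw [hewu, hews]
      omega

end Stmt4Aux
/-- Every finite generalised Cayley complex with at least 3 vertices is locally
1-connected: every link graph is connected. -/
theorem stmt_4 {V Γ : Type*} [Group Γ] [Fintype V] [MulAction Γ V]
    (X : TwoComplex V) (hsc : X.SimplyConnected)
    (hadj : ∀ (g : Γ) (u v : V), X.skel.Adj u v → X.skel.Adj (g • u) (g • v))
    (hfaces : ∀ (g : Γ), ∀ f ∈ X.faces, f.map (fun x => g • x) ∈ X.faces)
    (hfree : ∀ (g : Γ) (v : V), g • v = v → g = 1)
    (htrans : ∀ u v : V, ∃ g : Γ, g • u = v)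
    (hcard : 3 ≤ Fintype.card V) :
    ∀ v : V, (linkGraph X v).Connected := by
  classical
  obtain ⟨hconn, hnull⟩ := hsc
  intro v
  have hnocut : ∀ a b : V, a ≠ v → b ≠ v → ∃ p : X.skel.Walk a b, v ∉ p.support := by
    obtain ⟨o⟩ : Nonempty V := ⟨v⟩
    obtain ⟨z, -, hz⟩ := Finset.exists_max_image Finset.univ (fun x => X.skel.dist o x)
      ⟨o, Finset.mem_univ o⟩
    have hz : ∀ x : V, X.skel.dist o x ≤ X.skel.dist o z := fun x => hz x (Finset.mem_univ x)
    have hshort : ∀ a : V, a ≠ z → ∃ p : X.skel.Walk o a, z ∉ p.support := by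
      intro a haz
      obtain ⟨p, hp⟩ := (hconn.preconnected o a).exists_walk_length_eq_dist
      refine ⟨p, fun hzmem => ?_⟩
      have h1 : X.skel.dist o z ≤ (p.takeUntil z hzmem).length := SimpleGraph.dist_le _
      have h2 : X.skel.dist z a ≤ (p.dropUntil z hzmem).length := SimpleGraph.dist_le _
      have h3 : 0 < X.skel.dist z a :=
        (hconn.preconnected z a).pos_dist_of_ne (fun H => haz H.symm)
      have h4 : (p.takeUntil z hzmem).length + (p.dropUntil z hzmem).length = p.length := by
        rw [← SimpleGraph.Walk.length_append, SimpleGraph.Walk.take_spec]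
      have h5 := hz a
      omega
    have hznocut : ∀ a b : V, a ≠ z → b ≠ z → ∃ p : X.skel.Walk a b, z ∉ p.support := by
      intro a b ha hb
      obtain ⟨pa, hpa⟩ := hshort a ha
      obtain ⟨pb, hpb⟩ := hshort b hb
      refine ⟨pa.reverse.append pb, fun hmem => ?_⟩
      rw [SimpleGraph.Walk.mem_support_append_iff] at hmem
      rcases hmem with hmem | hmem
      · rw [SimpleGraph.Walk.support_reverse, List.mem_reverse] at hmem; exact hpa hmem
      · exact hpb hmem
    obtain ⟨g, hg⟩ := htrans z v
    intro a b ha hb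
    let F : X.skel →g X.skel := ⟨fun x => g • x, fun hxy => hadj g _ _ hxy⟩
    have ha' : g⁻¹ • a ≠ z := fun H => ha (by rw [← hg, ← H, smul_inv_smul])
    have hb' : g⁻¹ • b ≠ z := fun H => hb (by rw [← hg, ← H, smul_inv_smul])
    obtain ⟨p, hp⟩ := hznocut _ _ ha' hb'
    refine ⟨(p.map F).copy (smul_inv_smul g a) (smul_inv_smul g b), fun hm => ?_⟩
    rw [SimpleGraph.Walk.support_copy, SimpleGraph.Walk.support_map, List.mem_map] at hm
    obtain ⟨y, hy, hgy⟩ := hm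
    have hyz : y = z := by
      have : g • y = g • z := by
        show F y = g • z
        rw [hgy, ← hg]
      exact smul_left_cancel g this
    exact hp (hyz ▸ hy)
  have hex : ∃ u, X.skel.Adj v u := by
    obtain ⟨y, hy⟩ := Fintype.exists_ne_of_one_lt_card (by omega) v
    obtain ⟨p⟩ := hconn.preconnected v y
    cases p with
    | nil => exact absurd rfl hy
    | cons hadj' q => exact ⟨_, hadj'⟩
  rw [SimpleGraph.connected_iff]
  refine ⟨?_, ⟨⟨hex.choose, hex.choose_spec⟩⟩⟩
  rintro ⟨u, hu⟩ ⟨w, hw⟩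
  by_cases huw : u = w
  · subst huw
    exact SimpleGraph.Reachable.refl _
  by_contra hnr
  set h : V → ℤ := fun c =>
    if _ : ∃ H : X.skel.Adj v c, (linkGraph X v).Reachable ⟨u, hu⟩ ⟨c, H⟩ then 1 else 0
    with hhdef
  have Hh : ∀ f ∈ X.faces, ∀ (k : ℕ) (a b : V), [a, v, b] <+: f.rotate k → h a = h b := by
    intro f hf k a b hp
    have hchain := Stmt4Aux.chain'_cyclic_rotate (X.faces_cyclic f hf).2 k
    obtain ⟨rest, hrest⟩ := hp
    rw [← hrest, show ([a, v, b] ++ rest) ++ (([a, v, b] ++ rest).take 1)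
        = a :: v :: b :: (rest ++ [a]) from by simp, List.Chain', List.isChain_cons_cons, List.isChain_cons_cons]
      at hchain
    have hva : X.skel.Adj v a := hchain.1.symm
    have hvb : X.skel.Adj v b := hchain.2.1
    by_cases hab : a = b
    · rw [hab]
    · have hlink : (linkGraph X v).Adj ⟨a, hva⟩ ⟨b, hvb⟩ := by
        rw [linkGraph, SimpleGraph.fromRel_adj]
        exact ⟨by simpa [Subtype.ext_iff] using hab, Or.inl ⟨f, hf, k, ⟨rest, hrest⟩⟩⟩
      have hiff : (∃ H : X.skel.Adj v a, (linkGraph X v).Reachable ⟨u, hu⟩ ⟨a, H⟩) ↔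
          (∃ H : X.skel.Adj v b, (linkGraph X v).Reachable ⟨u, hu⟩ ⟨b, H⟩) := by
        constructor
        · rintro ⟨H, hr⟩; exact ⟨hvb, hr.trans hlink.reachable⟩
        · rintro ⟨H, hr⟩; exact ⟨hva, hr.trans hlink.symm.reachable⟩
      simp only [hhdef]
      by_cases hA : ∃ H : X.skel.Adj v a, (linkGraph X v).Reachable ⟨u, hu⟩ ⟨a, H⟩
      · rw [dif_pos hA, dif_pos (hiff.mp hA)]
      · rw [dif_neg hA, dif_neg (fun hB => hA (hiff.mpr hB))]
  obtain ⟨p, hps⟩ := hnocut u w hu.ne' hw.ne'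
  have hhead : p.support.head? = some u := by
    rw [SimpleGraph.Walk.support_eq_cons]
    rfl
  have hlast : p.support.getLast? = some w := by
    rw [List.getLast?_eq_getLast p.support_ne_nil, SimpleGraph.Walk.getLast_support]
  have hchainS : List.Chain' X.skel.Adj p.support := SimpleGraph.Walk.isChain_adj_support p
  have hWclosed : IsClosedWalkAt X v (v :: p.support ++ [v]) := by
    refine ⟨rfl, ?_, ?_⟩
    · rw [show v :: p.support ++ [v] = (v :: p.support) ++ v :: ([] : List V) from by simp,
        List.getLast?_append_cons]
      rfl
    · rw [show v :: p.support ++ [v] = (v :: p.support) ++ [v] from by simp]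
      refine List.IsChain.append ?_ (List.isChain_singleton v) ?_
      · rw [List.isChain_cons]
        refine ⟨fun y hy => ?_, hchainS⟩
        rw [hhead] at hy
        simp only [Option.mem_some_iff] at hy
        subst hy
        exact hu
      · intro x hx y hy
        rw [show v :: p.support = [v] ++ p.support from rfl,
          List.getLast?_append_of_ne_nil _ p.support_ne_nil, hlast] at hx
        simp only [Option.mem_some_iff, List.head?_cons] at hx hy
        subst hx; subst hy
        exact hw.symm
  have h0 := Stmt4Aux.phi_homotopic v h Hh (hnull v _ hWclosed)
  have h1 := Stmt4Aux.phi_vwalk v h p.support hps u w hhead hlast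
  have hu1 : h u = 1 := by
    simp only [hhdef]
    exact dif_pos ⟨hu, SimpleGraph.Reachable.refl _⟩
  have hw0 : h w = 0 := by
    simp only [hhdef]
    rw [dif_neg]
    rintro ⟨H, hr⟩
    exact hnr hr
  rw [h1, Stmt4Aux.phi_single, hu1, hw0] at h0
  omega
end
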